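/- For every n >= 1, there exists a balanced subset A of A_{2n} with #A = (2n-1) * 2^{n-1}. Consequently, the sphere S^{2n-1} has a moving finite unit tight frame consisting of (2n-1) * 2^{n-1} vector fields. -/

import Mathlib

open Finset RealInnerProductSpace

/-- The admissibility condition defining the set `A_{2n}`. -/
def Adm (n : ℕ) (U : (Fin (2*n) → ℤˣ) × (Fin (2*n) → Fin (2*n))) : Prop :=
  (∀ i, U.1 i = - U.1 (U.2 i)) ∧ (∀ i, U.2 (U.2 i) = i)

/-- A subset `A ⊆ A_{2n}` is balanced. -/
def IsBalanced (n : ℕ) (A : Finset ((Fin (2*n) → ℤˣ) × (Fin (2*n) → Fin (2*n)))) : Prop :=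
  (∀ p q : Fin (2*n), p ≠ q →
    ((A.filter (fun U => U.2 p = q)).card : ℝ) = A.card / (2*(n:ℝ) - 1)) ∧
  (∀ p q r s : Fin (2*n), p ≠ q → p ≠ r → p ≠ s → q ≠ r → q ≠ s → r ≠ s →
    (A.filter (fun U => U.1 p * U.1 q = -1 ∧
        (U.2 r = p ∧ U.2 s = q ∨ U.2 r = q ∧ U.2 s = p))).card =
    (A.filter (fun U => U.1 p * U.1 q = 1 ∧
        (U.2 r = p ∧ U.2 s = q ∨ U.2 r = q ∧ U.2 s = p))).card)

/-- The operator `U_{(ε,k)} : ℝ^{2n} → ℝ^{2n}`, `a ↦ (ε_{k_i} a_{k_i})_i`. -/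
def Uact (n : ℕ) (U : (Fin (2*n) → ℤˣ) × (Fin (2*n) → Fin (2*n)))
    (a : EuclideanSpace ℝ (Fin (2*n))) : EuclideanSpace ℝ (Fin (2*n)) :=
  WithLp.toLp 2 (fun i => ((U.1 (U.2 i) : ℤ) : ℝ) * a (U.2 i))

/-!
Index the coordinates by `ZMod (2N+1) ∪ {∞}` (`n = N + 1`). For each centre `t`, let `k_t` be the
reflection `x ↦ 2t - x`, extended by swapping `t` and `∞`. Signs are `ε(∞) = 1`, `ε(t) = -1` and
`ε(x) = σ(x - t)` for an odd sign function `σ` on `ZMod (2N+1) \ {0}`, which is free on the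
`N` levels `|d| = 1, …, N`; this gives `(2N+1) 2^N` operators. Since `2` is invertible, each pair
`p ≠ q` is swapped by exactly one `k_t`, which is condition (i). For (ii), when `k_t` sends `{r, s}`
onto `{p, q}` the points `p, q` are not swapped by `k_t`, so they lie on different levels and
flipping `σ` on the level of one of them is a bijection of the sign parameters that reverses
`ε_p ε_q`.

For any balanced family, grouping the operators by the unordered pair `{k_i, k_j}` shows that
`∑_U (U a)_i (U a)_j = (#A / (2n-1)) (δ_ij - a_i a_j)` for unit `a`, which is the tight frame
identity on `a^⊥`.
-/

section SignedInvolution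

variable {n : ℕ} {U : (Fin (2*n) → ℤˣ) × (Fin (2*n) → Fin (2*n))}

@[simp]
lemma Uact_apply (a : EuclideanSpace ℝ (Fin (2*n))) (i : Fin (2*n)) :
    Uact n U a i = ((U.1 (U.2 i) : ℤ) : ℝ) * a (U.2 i) := rfl

lemma continuous_Uact (U : (Fin (2*n) → ℤˣ) × (Fin (2*n) → Fin (2*n))) :
    Continuous (Uact n U) :=
  (PiLp.continuous_toLp _ _).comp
    (continuous_pi fun i => continuous_const.mul (PiLp.continuous_apply _ _ (U.2 i)))

lemma sq_intCast_units (u : ℤˣ) : ((u : ℤ) : ℝ) ^ 2 = 1 := by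
  rcases Int.units_eq_one_or u with rfl | rfl <;> norm_num

lemma norm_Uact (hU : Function.Involutive U.2) (a : EuclideanSpace ℝ (Fin (2*n))) :
    ‖Uact n U a‖ = ‖a‖ := by
  have hsq : ‖Uact n U a‖ ^ 2 = ‖a‖ ^ 2 := by
    simp only [EuclideanSpace.real_norm_sq_eq, Uact_apply, mul_pow, sq_intCast_units, one_mul]
    exact Equiv.sum_comp (hU.toPerm U.2) (fun i => a i ^ 2)
  exact (sq_eq_sq₀ (norm_nonneg _) (norm_nonneg _)).1 hsq

lemma Adm.involutive (hU : Adm n U) : Function.Involutive U.2 := hU.2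

lemma Adm.apply_ne (hU : Adm n U) (i : Fin (2*n)) : U.2 i ≠ i := by
  intro h
  have := hU.1 i
  rw [h] at this
  rcases Int.units_eq_one_or (U.1 i) with h1 | h1 <;> rw [h1] at this <;> exact absurd this (by decide)

lemma Adm.apply_eq_iff (hU : Adm n U) {i j : Fin (2*n)} : U.2 i = j ↔ U.2 j = i :=
  ⟨fun h => h ▸ hU.2 i, fun h => h ▸ hU.2 j⟩

lemma Adm.ne_of_apply_ne (hU : Adm n U) {i j : Fin (2*n)} (hij : i ≠ j) (hk : U.2 i ≠ j) :
    U.2 i ≠ U.2 j ∧ U.2 i ≠ i ∧ U.2 j ≠ i ∧ U.2 j ≠ j :=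
  ⟨fun h => hij (hU.involutive.injective h), hU.apply_ne i,
    fun h => hk (hU.apply_eq_iff.1 h), hU.apply_ne j⟩

lemma inner_Uact_self (hU : Adm n U) (a : EuclideanSpace ℝ (Fin (2*n))) :
    ⟪Uact n U a, a⟫ = 0 := by
  set S := ∑ i, ((U.1 (U.2 i) : ℤ) : ℝ) * a (U.2 i) * a i
  have hS : ⟪Uact n U a, a⟫ = S := by simp [PiLp.inner_apply, S, mul_comm]
  -- reindexing by the involution `U.2` flips the sign of every term
  have hneg : S = -S := by
    rw [← Finset.sum_neg_distrib]
    refine (Equiv.sum_comp (hU.involutive.toPerm U.2) _).symm.trans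
      (Finset.sum_congr rfl fun i _ => ?_)
    simp only [Function.Involutive.coe_toPerm, hU.2 i, hU.1 i, Units.val_neg, Int.cast_neg]
    ring
  rw [hS]; linarith

end SignedInvolution

lemma card_filter_eq_neg_one_eq_iff_sum_eq_zero {α : Type*} (s : Finset α) (P : α → Prop)
    [DecidablePred P] (f : α → ℤˣ) :
    #{x ∈ s | f x = -1 ∧ P x} = #{x ∈ s | f x = 1 ∧ P x} ↔ ∑ x ∈ s with P x, (f x : ℤ) = 0 := by
  have hf : ∀ x, (f x : ℤ) = (if f x = 1 then 1 else 0) - (if f x = -1 then 1 else 0) := fun x => by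
    rcases Int.units_eq_one_or (f x) with h | h <;> simp [h]
  simp only [hf, Finset.sum_sub_distrib, Finset.sum_boole, Finset.filter_filter, and_comm]
  omega

section Balanced

variable {n : ℕ} {A : Finset ((Fin (2*n) → ℤˣ) × (Fin (2*n) → Fin (2*n)))}

lemma IsBalanced.sum_sign_mul_sign_eq_zero (hA : IsBalanced n A) {p q r s : Fin (2*n)}
    (hpq : p ≠ q) (hpr : p ≠ r) (hps : p ≠ s) (hqr : q ≠ r) (hqs : q ≠ s) (hrs : r ≠ s) :
    ∑ U ∈ A with s(U.2 r, U.2 s) = s(p, q), ((U.1 p * U.1 q : ℤˣ) : ℤ) = 0 := by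
  rw [← card_filter_eq_neg_one_eq_iff_sum_eq_zero]
  simp only [Sym2.eq_iff]
  exact hA.2 p q r s hpq hpr hps hqr hqs hrs

lemma IsBalanced.card_filter_apply_eq (hA : IsBalanced n A) (hAdm : ∀ U ∈ A, Adm n U)
    (p q : Fin (2*n)) :
    (#{U ∈ A | U.2 p = q} : ℝ) = if p = q then 0 else #A / (2*(n:ℝ) - 1) := by
  split_ifs with h
  · subst h
    rw [Finset.filter_false_of_mem fun U hU => (hAdm U hU).apply_ne p]
    simp
  · exact hA.1 p q h

lemma IsBalanced.sum_Uact_apply_mul_self (hA : IsBalanced n A) (hAdm : ∀ U ∈ A, Adm n U)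
    (a : EuclideanSpace ℝ (Fin (2*n))) (j : Fin (2*n)) :
    ∑ U ∈ A, Uact n U a j * Uact n U a j = #A / (2*(n:ℝ) - 1) * (‖a‖ ^ 2 - a j ^ 2) := by
  have hfiber : ∀ q, ∑ U ∈ A with U.2 j = q, Uact n U a j * Uact n U a j =
      (if j = q then 0 else #A / (2*(n:ℝ) - 1)) * a q ^ 2 := fun q => by
    rw [← hA.card_filter_apply_eq hAdm, ← nsmul_eq_mul, ← Finset.sum_const]
    refine Finset.sum_congr rfl fun U hU => ?_
    rw [← (Finset.mem_filter.1 hU).2, Uact_apply, mul_mul_mul_comm, ← sq, sq_intCast_units,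
      one_mul, sq]
  have hsplit : ∀ q, (if j = q then 0 else #A / (2*(n:ℝ) - 1)) * a q ^ 2 =
      #A / (2*(n:ℝ) - 1) * a q ^ 2 - if j = q then #A / (2*(n:ℝ) - 1) * a q ^ 2 else 0 :=
    fun q => by split_ifs <;> ring
  rw [← Finset.sum_fiberwise A (fun U => U.2 j), Finset.sum_congr rfl fun q _ => hfiber q,
    Finset.sum_congr rfl fun q _ => hsplit q, Finset.sum_sub_distrib, Finset.sum_ite_eq,
    if_pos (Finset.mem_univ j), ← Finset.mul_sum, EuclideanSpace.real_norm_sq_eq, mul_sub]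

lemma IsBalanced.sum_fiber_Uact_apply_mul_eq_zero (hA : IsBalanced n A)
    (hAdm : ∀ U ∈ A, Adm n U) (a : EuclideanSpace ℝ (Fin (2*n))) {i j p q : Fin (2*n)}
    (hij : i ≠ j) (hpq : s(p, q) ≠ s(j, i)) :
    ∑ U ∈ A with s(U.2 i, U.2 j) = s(p, q), Uact n U a i * Uact n U a j = 0 := by
  have hterm : ∀ U ∈ {U ∈ A | s(U.2 i, U.2 j) = s(p, q)},
      Uact n U a i * Uact n U a j = (((U.1 p * U.1 q : ℤˣ) : ℤ) : ℝ) * (a p * a q) := by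
    intro U hU
    rcases Sym2.eq_iff.1 (Finset.mem_filter.1 hU).2 with ⟨hp, hq⟩ | ⟨hq, hp⟩ <;>
      simp only [Uact_apply, hp, hq, Units.val_mul, Int.cast_mul] <;> ring
  rw [Finset.sum_congr rfl hterm, ← Finset.sum_mul]
  obtain hempty | ⟨U, hU⟩ := ({U ∈ A | s(U.2 i, U.2 j) = s(p, q)}).eq_empty_or_nonempty
  · rw [hempty, Finset.sum_empty, zero_mul]
  -- a nonempty fibre forces `p, q, i, j` to be pairwise distinct, so condition (ii) applies
  obtain ⟨hUA, hUz⟩ := Finset.mem_filter.1 hU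
  have hk : U.2 i ≠ j := fun h => hpq (by rw [← hUz, h, (hAdm U hUA).apply_eq_iff.1 h])
  obtain ⟨h₁, h₂, h₃, h₄⟩ := (hAdm U hUA).ne_of_apply_ne hij hk
  rw [← Int.cast_sum]
  rcases Sym2.eq_iff.1 hUz with ⟨rfl, rfl⟩ | ⟨rfl, rfl⟩
  · rw [hA.sum_sign_mul_sign_eq_zero h₁ h₂ hk h₃ h₄ hij, Int.cast_zero, zero_mul]
  · rw [hA.sum_sign_mul_sign_eq_zero h₁.symm h₃ h₄ h₂ hk hij, Int.cast_zero, zero_mul]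

lemma IsBalanced.sum_Uact_apply_mul_of_ne (hA : IsBalanced n A) (hAdm : ∀ U ∈ A, Adm n U)
    (a : EuclideanSpace ℝ (Fin (2*n))) {i j : Fin (2*n)} (hij : i ≠ j) :
    ∑ U ∈ A, Uact n U a i * Uact n U a j = -(#A / (2*(n:ℝ) - 1) * (a i * a j)) := by
  rw [← Finset.sum_fiberwise A (fun U => s(U.2 i, U.2 j)),
    Finset.sum_eq_single_of_mem s(j, i) (Finset.mem_univ _) fun z _ hz => by
      induction z using Sym2.ind with
      | h p q => exact hA.sum_fiber_Uact_apply_mul_eq_zero hAdm a hij hz]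
  have hfiber : {U ∈ A | s(U.2 i, U.2 j) = s(j, i)} = {U ∈ A | U.2 i = j} :=
    Finset.filter_congr fun U hU => by
      simp only [Sym2.eq_iff, (hAdm U hU).apply_eq_iff (i := j), and_self,
        or_iff_left_iff_imp, and_imp]
      exact fun h => absurd h ((hAdm U hU).apply_ne i)
  rw [hfiber, ← hA.1 i j hij, ← mul_neg, ← nsmul_eq_mul, ← Finset.sum_const]
  refine Finset.sum_congr rfl fun U hU => ?_
  obtain ⟨hUA, hk⟩ := Finset.mem_filter.1 hU
  have hk' : U.2 j = i := (hAdm U hUA).apply_eq_iff.1 hk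
  have hε : U.1 j = -U.1 i := by rw [(hAdm U hUA).1 i, hk, neg_neg]
  rw [Uact_apply, Uact_apply, hk, hk', hε, Units.val_neg, Int.cast_neg]
  linear_combination (-(a i * a j)) * sq_intCast_units (U.1 i)

lemma IsBalanced.sum_inner_smul_Uact (hA : IsBalanced n A) (hAdm : ∀ U ∈ A, Adm n U)
    {a x : EuclideanSpace ℝ (Fin (2*n))} (ha : ‖a‖ = 1) (hx : ⟪x, a⟫ = 0) :
    ∑ U ∈ A, ⟪x, Uact n U a⟫ • Uact n U a = (#A / (2*(n:ℝ) - 1)) • x := by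
  have hentry : ∀ i j, ∑ U ∈ A, Uact n U a j * Uact n U a i =
      #A / (2*(n:ℝ) - 1) * ((if j = i then 1 else 0) - a j * a i) := fun i j => by
    split_ifs with h
    · rw [h, hA.sum_Uact_apply_mul_self hAdm, ha]; ring
    · rw [hA.sum_Uact_apply_mul_of_ne hAdm a h]; ring
  have hxa : ∑ j, x j * a j = 0 := by simpa [PiLp.inner_apply, mul_comm] using hx
  ext i
  simp only [WithLp.ofLp_sum, WithLp.ofLp_smul, Finset.sum_apply, Pi.smul_apply, smul_eq_mul,
    PiLp.inner_apply, RCLike.inner_apply, conj_trivial, Finset.sum_mul]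
  rw [Finset.sum_comm]
  calc ∑ j, ∑ U ∈ A, Uact n U a j * x j * Uact n U a i
      = ∑ j, (#A / (2*(n:ℝ) - 1) * (if j = i then x j else 0)
          - #A / (2*(n:ℝ) - 1) * a i * (x j * a j)) := by
        refine Finset.sum_congr rfl fun j _ => ?_
        simp only [mul_right_comm _ (x j), ← Finset.sum_mul, hentry]
        split_ifs <;> ring
    _ = #A / (2*(n:ℝ) - 1) * x i := by
        rw [Finset.sum_sub_distrib, ← Finset.mul_sum, ← Finset.mul_sum, hxa,
          Finset.sum_ite_eq' Finset.univ i, if_pos (Finset.mem_univ i), mul_zero, sub_zero]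

end Balanced

section Reflection

variable {G : Type*} [AddCommGroup G]

lemma two_nsmul_sub_ne_self {t x : G} (h : x ≠ t) : 2 • t - x ≠ t := fun h' => by
  rw [sub_eq_iff_eq_add, two_nsmul] at h'
  exact h (add_left_cancel h').symm

variable [DecidableEq G]

-- `none` is the point `∞`, swapped with the centre `t`.
def reflect (t : G) : Option G → Option G
  | none => some t
  | some x => if x = t then none else some (2 • t - x)

@[simp]
lemma reflect_none (t : G) : reflect t none = some t := rfl

@[simp]
lemma reflect_self (t : G) : reflect t (some t) = none := if_pos rfl

lemma reflect_some_of_ne {t x : G} (h : x ≠ t) : reflect t (some x) = some (2 • t - x) :=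
  if_neg h

lemma reflect_involutive (t : G) : Function.Involutive (reflect t) := by
  rintro (_ | x)
  · simp
  · by_cases h : x = t
    · simp [h]
    · rw [reflect_some_of_ne h, reflect_some_of_ne (two_nsmul_sub_ne_self h), sub_sub_cancel]

lemma existsUnique_reflect_eq (h2 : (Nat.card G).Coprime 2) {P Q : Option G} (hPQ : P ≠ Q) :
    ∃! t, reflect t P = Q := by
  rcases P with _ | x <;> rcases Q with _ | y
  · exact absurd rfl hPQ
  · exact ⟨y, rfl, fun t ht => Option.some_injective _ ht⟩
  · refine ⟨x, by simp [reflect], fun t ht => ?_⟩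
    by_contra hxt
    exact Option.some_ne_none _ ((reflect_some_of_ne (Ne.symm hxt)).symm.trans ht)
  · have hxy : x ≠ y := fun h => hPQ (congrArg some h)
    have hiff : ∀ t, reflect t (some x) = some y ↔ 2 • t = x + y := fun t => by
      by_cases hxt : x = t
      · subst hxt
        rw [reflect_self, two_nsmul]
        exact iff_of_false (Option.some_ne_none _).symm fun h => hxy (add_left_cancel h)
      · rw [reflect_some_of_ne hxt, Option.some_inj, sub_eq_iff_eq_add, add_comm y]
    simp only [hiff]
    exact h2.nsmul_right_bijective.existsUnique (x + y)

lemma reflect_ne_of_reflect_mem {t : G} {P Q R S : Option G} (hPR : P ≠ R) (hQR : Q ≠ R)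
    (h : reflect t R = P ∧ reflect t S = Q ∨ reflect t R = Q ∧ reflect t S = P) :
    reflect t P ≠ Q := by
  intro hPQ
  have hQP : reflect t Q = P := hPQ ▸ reflect_involutive t P
  rcases h with ⟨h, -⟩ | ⟨h, -⟩
  · exact hQR (by rw [← hPQ, ← h, reflect_involutive t R])
  · exact hPR (by rw [← hQP, ← h, reflect_involutive t R])

lemma card_filter_reflect_eq [Fintype G] (h2 : (Nat.card G).Coprime 2) {P Q : Option G}
    (hPQ : P ≠ Q) : #{t | reflect t P = Q} = 1 := by
  obtain ⟨t₀, ht₀, huniq⟩ := existsUnique_reflect_eq h2 hPQ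
  exact Finset.card_eq_one.2 ⟨t₀, Finset.ext fun t => by simpa using ⟨huniq t, fun h => h ▸ ht₀⟩⟩

end Reflection

section Signs

variable {N : ℕ}

def signAt (c : Fin N → ℤˣ) (j : ℕ) : ℤˣ := if h : j < N then c ⟨j, h⟩ else 1

-- The odd extension of `c`, with `c j` attached to the level `|d| = j + 1`; the value at `0` is junk.
def oddSign (c : Fin N → ℤˣ) (d : ZMod (2*N+1)) : ℤˣ :=
  if 0 < d.valMinAbs then signAt c (d.valMinAbs.natAbs - 1) else -signAt c (d.valMinAbs.natAbs - 1)

def signs (t : ZMod (2*N+1)) (c : Fin N → ℤˣ) : Option (ZMod (2*N+1)) → ℤˣ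
  | none => 1
  | some x => if x = t then -1 else oddSign c (x - t)

def level (t : ZMod (2*N+1)) : Option (ZMod (2*N+1)) → ℕ
  | none => 0
  | some x => (x - t).valMinAbs.natAbs

lemma valMinAbs_neg_zmod_odd (d : ZMod (2*N+1)) : (-d).valMinAbs = -d.valMinAbs :=
  ZMod.valMinAbs_neg_of_ne_half (by omega)

lemma oddSign_neg (c : Fin N → ℤˣ) {d : ZMod (2*N+1)} (hd : d ≠ 0) :
    oddSign c (-d) = -oddSign c d := by
  have hv : d.valMinAbs ≠ 0 := (ZMod.valMinAbs_eq_zero d).not.2 hd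
  unfold oddSign
  rw [valMinAbs_neg_zmod_odd, Int.natAbs_neg]
  rcases hv.lt_or_gt with h | h
  · simp [h, h.not_gt]
  · simp [h, h.le]

lemma signs_reflect (t : ZMod (2*N+1)) (c : Fin N → ℤˣ) (P : Option (ZMod (2*N+1))) :
    signs t c (reflect t P) = -signs t c P := by
  rcases P with _ | x
  · simp [signs]
  · by_cases hxt : x = t
    · subst hxt; simp [signs]
    · rw [reflect_some_of_ne hxt]
      simp only [signs, if_neg hxt, if_neg (two_nsmul_sub_ne_self hxt)]
      rw [show 2 • t - x - t = -(x - t) by abel, oddSign_neg c (sub_ne_zero.2 hxt)]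

lemma level_le (t : ZMod (2*N+1)) (P : Option (ZMod (2*N+1))) : level t P ≤ N := by
  rcases P with _ | x
  · exact Nat.zero_le N
  · exact (ZMod.natAbs_valMinAbs_le (x - t)).trans (by omega)

lemma level_eq_zero_iff {t : ZMod (2*N+1)} {P : Option (ZMod (2*N+1))} :
    level t P = 0 ↔ P = none ∨ P = some t := by
  rcases P with _ | x <;> simp [level, sub_eq_zero]

lemma eq_or_reflect_eq_of_level_eq {t : ZMod (2*N+1)} {P Q : Option (ZMod (2*N+1))}
    (h : level t P = level t Q) (hP : level t P ≠ 0) : P = Q ∨ reflect t P = Q := by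
  rcases P with _ | x
  · exact absurd rfl hP
  rcases Q with _ | y
  · exact absurd h hP
  have hxt : x ≠ t := fun hxt => hP (level_eq_zero_iff.2 (Or.inr (congrArg some hxt)))
  rcases ZMod.natAbs_valMinAbs_eq_natAbs_valMinAbs.1 h with hxy | hxy
  · exact Or.inl (congrArg some (sub_left_injective hxy))
  · refine Or.inr ?_
    rw [reflect_some_of_ne hxt, two_nsmul]
    exact congrArg some (by linear_combination -hxy)

lemma level_ne_level {t : ZMod (2*N+1)} {P Q : Option (ZMod (2*N+1))} (hPQ : P ≠ Q)
    (hR : reflect t P ≠ Q) : level t P ≠ level t Q := by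
  intro h
  by_cases hP : level t P = 0
  · rcases level_eq_zero_iff.1 hP with rfl | rfl <;>
      rcases level_eq_zero_iff.1 (h ▸ hP) with rfl | rfl <;> simp_all
  · rcases eq_or_reflect_eq_of_level_eq h hP with h' | h' <;> contradiction

lemma signAt_mul_mulSingle (c : Fin N → ℤˣ) (J : Fin N) (j : ℕ) :
    signAt (c * Pi.mulSingle J (-1)) j = if j = J then -signAt c j else signAt c j := by
  by_cases hj : j < N
  · simp [signAt, hj, Pi.mulSingle_apply, Fin.ext_iff]
  · have : j ≠ J := fun h => hj (h ▸ J.isLt)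
    simp [signAt, hj, this]

lemma signs_mul_mulSingle (t : ZMod (2*N+1)) (c : Fin N → ℤˣ) (J : Fin N)
    (P : Option (ZMod (2*N+1))) :
    signs t (c * Pi.mulSingle J (-1)) P =
      if level t P = J + 1 then -signs t c P else signs t c P := by
  rcases P with _ | x
  · simp [signs, level]
  · by_cases hxt : x = t
    · simp [signs, level, hxt]
    · have hv : (x - t).valMinAbs.natAbs ≠ 0 := by simpa [sub_eq_zero] using hxt
      have hJ : (x - t).valMinAbs.natAbs - 1 = J ↔ (x - t).valMinAbs.natAbs = J + 1 := by omega
      simp only [signs, level, if_neg hxt, oddSign, signAt_mul_mulSingle, hJ]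
      split_ifs <;> simp

lemma sum_signs_mul_signs_eq_zero (t : ZMod (2*N+1)) {P Q : Option (ZMod (2*N+1))} (hPQ : P ≠ Q)
    (hR : reflect t P ≠ Q) : ∑ c : Fin N → ℤˣ, ((signs t c P * signs t c Q : ℤˣ) : ℤ) = 0 := by
  have hlev := level_ne_level hPQ hR
  wlog hQ : level t Q ≠ 0 generalizing P Q
  · have hR' : reflect t Q ≠ P := fun h => hR (h ▸ reflect_involutive t Q)
    simpa only [mul_comm] using this hPQ.symm hR' hlev.symm (by omega)
  -- flipping the sign attached to the level of `Q` changes the sign at `Q` but not at `P`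
  let J : Fin N := ⟨level t Q - 1, by have := level_le t Q; omega⟩
  have hflip : ∀ c : Fin N → ℤˣ,
      ((signs t (c * Pi.mulSingle J (-1)) P * signs t (c * Pi.mulSingle J (-1)) Q : ℤˣ) : ℤ) =
        -((signs t c P * signs t c Q : ℤˣ) : ℤ) := fun c => by
    have hJQ : level t Q = J + 1 := by simp only [J]; omega
    have hJP : level t P ≠ J + 1 := hJQ ▸ hlev
    rw [signs_mul_mulSingle, signs_mul_mulSingle, if_pos hJQ, if_neg hJP, mul_neg, Units.val_neg]
  have := Equiv.sum_comp (Equiv.mulRight (Pi.mulSingle J (-1)))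
    (fun c => ((signs t c P * signs t c Q : ℤˣ) : ℤ))
  simp only [Equiv.coe_mulRight, hflip, Finset.sum_neg_distrib] at this
  omega

lemma signs_some_add_succ (t : ZMod (2*N+1)) (c : Fin N → ℤˣ) (j : Fin N) :
    signs t c (some (t + ((j + 1 : ℕ) : ZMod (2*N+1)))) = c j := by
  have hv : ((j + 1 : ℕ) : ZMod (2*N+1)).valMinAbs = ((j + 1 : ℕ) : ℤ) :=
    ZMod.valMinAbs_natCast_of_le_half (by omega)
  have hne : t + ((j + 1 : ℕ) : ZMod (2*N+1)) ≠ t := fun h => by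
    have := congrArg ZMod.valMinAbs (add_eq_left.1 h)
    rw [hv, ZMod.valMinAbs_zero] at this
    omega
  simp only [signs, if_neg hne, add_sub_cancel_left, oddSign, hv, Int.natAbs_natCast,
    Nat.add_sub_cancel, signAt, dif_pos j.isLt]
  exact if_pos (by omega)

lemma injective_signs_reflect :
    Function.Injective fun tc : ZMod (2*N+1) × (Fin N → ℤˣ) => (signs tc.1 tc.2, reflect tc.1) := by
  rintro ⟨t, c⟩ ⟨t', c'⟩ h
  obtain ⟨hs, hr⟩ := Prod.mk.inj h
  obtain rfl : t = t' := Option.some_injective _ (congrFun hr none)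
  congr 1
  funext j
  rw [← signs_some_add_succ t c j, hs, signs_some_add_succ]

end Signs

section Family

def relabel {α ι : Type*} (e : α ≃ ι) (U : (ι → ℤˣ) × (ι → ι)) : (α → ℤˣ) × (α → α) :=
  (U.1 ∘ e, e.symm ∘ U.2 ∘ e)

lemma relabel_injective {α ι : Type*} (e : α ≃ ι) : Function.Injective (relabel e) := by
  rintro ⟨ε, k⟩ ⟨ε', k'⟩ h
  obtain ⟨hε, hk⟩ := Prod.mk.inj h
  refine Prod.ext (funext fun P => ?_) (funext fun P => ?_)
  · simpa using congrFun hε (e.symm P)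
  · simpa using congrFun hk (e.symm P)

lemma adm_relabel {n : ℕ} {ι : Type*} (e : Fin (2*n) ≃ ι) {ε : ι → ℤˣ} {k : ι → ι}
    (hε : ∀ P, ε (k P) = -ε P) (hk : Function.Involutive k) : Adm n (relabel e (ε, k)) :=
  ⟨fun i => by simp [relabel, hε], fun i => by simp [relabel, hk (e i)]⟩

variable (N : ℕ)

-- Any bijection works: the construction is transported along it.
noncomputable def finEquivOptionZMod : Fin (2*(N+1)) ≃ Option (ZMod (2*N+1)) :=
  Fintype.equivOfCardEq (by simp [ZMod.card]; ring)

noncomputable def familyEmbedding :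
    ZMod (2*N+1) × (Fin N → ℤˣ) ↪ (Fin (2*(N+1)) → ℤˣ) × (Fin (2*(N+1)) → Fin (2*(N+1))) :=
  ⟨fun tc => relabel (finEquivOptionZMod N) (signs tc.1 tc.2, reflect tc.1),
    (relabel_injective _).comp injective_signs_reflect⟩

noncomputable def balancedFamily :
    Finset ((Fin (2*(N+1)) → ℤˣ) × (Fin (2*(N+1)) → Fin (2*(N+1)))) :=
  univ.map (familyEmbedding N)

lemma card_balancedFamily : #(balancedFamily N) = (2*N+1) * 2^N := by
  simp [balancedFamily, ZMod.card]

lemma adm_of_mem_balancedFamily : ∀ U ∈ balancedFamily N, Adm (N+1) U := by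
  simp only [balancedFamily, Finset.mem_map, Finset.mem_univ, true_and, forall_exists_index,
    forall_apply_eq_imp_iff]
  exact fun tc => adm_relabel _ (signs_reflect tc.1 tc.2) (reflect_involutive tc.1)

lemma card_filter_balancedFamily {p q : Fin (2*(N+1))} (hpq : p ≠ q) :
    #{U ∈ balancedFamily N | U.2 p = q} = 2^N := by
  have hodd : (Nat.card (ZMod (2*N+1))).Coprime 2 := by
    rw [Nat.card_zmod, Nat.coprime_two_right]; exact odd_two_mul_add_one N
  set e := finEquivOptionZMod N
  have hfilter : {tc ∈ (univ : Finset (ZMod (2*N+1) × (Fin N → ℤˣ))) |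
      (familyEmbedding N tc).2 p = q} =
      ({t | reflect t (e p) = e q} : Finset (ZMod (2*N+1))) ×ˢ (univ : Finset (Fin N → ℤˣ)) := by
    rw [← Finset.univ_product_univ, ← Finset.filter_product_left]
    simp [familyEmbedding, relabel, e, Equiv.symm_apply_eq]
  simp only [balancedFamily, Finset.filter_map, Finset.card_map, Function.comp_def, hfilter]
  rw [Finset.card_product, card_filter_reflect_eq hodd (e.injective.ne hpq), Finset.card_univ,
    Fintype.card_fun, Fintype.card_units_int, Fintype.card_fin, one_mul]

lemma sum_sign_mul_sign_balancedFamily {p q r s : Fin (2*(N+1))} (hpq : p ≠ q) (hpr : p ≠ r)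
    (hqr : q ≠ r) :
    ∑ U ∈ balancedFamily N with U.2 r = p ∧ U.2 s = q ∨ U.2 r = q ∧ U.2 s = p,
      ((U.1 p * U.1 q : ℤˣ) : ℤ) = 0 := by
  set e := finEquivOptionZMod N
  rw [Finset.sum_filter, balancedFamily, Finset.sum_map, Fintype.sum_prod_type]
  refine Finset.sum_eq_zero fun t _ => ?_
  simp only [familyEmbedding, relabel, Function.Embedding.coeFn_mk, Function.comp_apply,
    Equiv.symm_apply_eq]
  split_ifs with h
  · exact sum_signs_mul_signs_eq_zero t (e.injective.ne hpq)
      (reflect_ne_of_reflect_mem (e.injective.ne hpr) (e.injective.ne hqr) h)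
  · exact Finset.sum_const_zero

lemma two_mul_succ_sub_one : 2 * ((N + 1 : ℕ) : ℝ) - 1 = 2 * N + 1 := by push_cast; ring

lemma isBalanced_balancedFamily : IsBalanced (N+1) (balancedFamily N) := by
  refine ⟨fun p q hpq => ?_, fun p q r s hpq hpr _ hqr _ _ => ?_⟩
  · rw [card_filter_balancedFamily N hpq, card_balancedFamily, two_mul_succ_sub_one,
      eq_div_iff (by positivity)]
    push_cast
    ring
  · exact (card_filter_eq_neg_one_eq_iff_sum_eq_zero _ _ _).2
      (sum_sign_mul_sign_balancedFamily N hpq hpr hqr)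

end Family

theorem exists_small_balanced_set (n : ℕ) (hn : 1 ≤ n) :
    ∃ A : Finset ((Fin (2*n) → ℤˣ) × (Fin (2*n) → Fin (2*n))),
      (∀ U ∈ A, Adm n U) ∧
      IsBalanced n A ∧
      A.card = (2*n - 1) * 2^(n-1) ∧
      (∀ U ∈ A, Continuous (fun a : EuclideanSpace ℝ (Fin (2*n)) => Uact n U a)) ∧
      (∀ a : EuclideanSpace ℝ (Fin (2*n)), ‖a‖ = 1 →
        (∀ U ∈ A, ‖Uact n U a‖ = 1 ∧ ⟪Uact n U a, a⟫ = 0) ∧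
        (∀ x : EuclideanSpace ℝ (Fin (2*n)), ⟪x, a⟫ = 0 →
          x = ((2*(n:ℝ) - 1) / A.card) • ∑ U ∈ A, ⟪x, Uact n U a⟫ • Uact n U a)) := by
  obtain ⟨N, rfl⟩ : ∃ N, n = N + 1 := ⟨n - 1, by omega⟩
  have hAdm := adm_of_mem_balancedFamily N
  have hA := isBalanced_balancedFamily N
  have hcard : #(balancedFamily N) = (2*(N+1) - 1) * 2^(N+1-1) := by
    rw [card_balancedFamily]; congr 1
  refine ⟨balancedFamily N, hAdm, hA, hcard, fun U _ => continuous_Uact U, fun a ha =>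
    ⟨fun U hU => ⟨(norm_Uact (hAdm U hU).involutive a).trans ha, inner_Uact_self (hAdm U hU) a⟩,
      fun x hx => ?_⟩⟩
  have hinv : (2 * ((N + 1 : ℕ) : ℝ) - 1) / #(balancedFamily N) *
      (#(balancedFamily N) / (2 * ((N + 1 : ℕ) : ℝ) - 1)) = 1 := by
    rw [two_mul_succ_sub_one, card_balancedFamily]
    field_simp
  rw [hA.sum_inner_smul_Uact hAdm ha hx, smul_smul, hinv, one_smul]
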